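/- arXiv:2309.06116 — 8 statements merged into one kernel-verified Lean document; each statement's English description precedes it below -/
import Mathlib

section
/- The Shelah–Soifer graph has a minimal dominating set. -/
/-- The Shelah–Soifer graph on `ℝ`: `x` and `y` are adjacent iff
`x - y ∈ (ℚ + √2) ∪ (ℚ + (-√2))`. -/
noncomputable def ShelahSoiferGraph : SimpleGraph ℝ where
  Adj x y := (∃ q : ℚ, x - y = q + Real.sqrt 2) ∨ (∃ q : ℚ, x - y = q - Real.sqrt 2)
  symm := by
    constructor
    rintro x y (⟨q, hq⟩ | ⟨q, hq⟩)
    · exact Or.inr ⟨-q, by push_cast; linarith⟩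
    · exact Or.inl ⟨-q, by push_cast; linarith⟩
  loopless := by
    constructor
    rintro x (⟨q, hq⟩ | ⟨q, hq⟩)
    · exact irrational_sqrt_two ⟨-q, by push_cast; linarith⟩
    · exact irrational_sqrt_two ⟨q, by push_cast; linarith⟩

/-- `D` is a dominating set of `G`. -/
def IsDomSet {V : Type*} (G : SimpleGraph V) (D : Set V) : Prop :=
  ∀ v : V, v ∈ D ∨ ∃ d ∈ D, G.Adj v d

/-- `D` is a minimal dominating set of `G`: a dominating set with no proper subset
that is a dominating set. -/
def IsMinDomSet {V : Type*} (G : SimpleGraph V) (D : Set V) : Prop :=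
  IsDomSet G D ∧ ∀ D' : Set V, D' ⊂ D → ¬ IsDomSet G D'

/-!
Every vertex `x` is adjacent to `x - √2`, and the graph is properly 2-colourable: a `ℚ`-linear
functional `f : ℝ → ℚ` with `f 1 = 0` and `f √2 = 1`, which exists because `√2` is irrational,
changes by exactly `±1` along every edge, so the parity of `⌊f x⌋` is a proper colouring. A colour
class of a 2-colouring without isolated vertices is an independent dominating set, and an
independent dominating set is minimal.
-/

theorem IsDomSet.isMinDomSet_of_isIndepSet {V : Type*} {G : SimpleGraph V} {D : Set V}
    (hD : IsDomSet G D) (hind : G.IsIndepSet D) : IsMinDomSet G D := by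
  refine ⟨hD, fun D' hD'D hD' => ?_⟩
  obtain ⟨d, hdD, hdD'⟩ := Set.exists_of_ssubset hD'D
  rcases hD' d with hd | ⟨e, heD', hde⟩
  · exact hdD' hd
  · exact hind hdD (hD'D.subset heD') (fun hde' => hdD' (hde' ▸ heD')) hde

theorem SimpleGraph.Coloring.isDomSet_colorClass {V : Type*} {G : SimpleGraph V}
    (C : G.Coloring Bool) (hG : ∀ v, ∃ w, G.Adj v w) (b : Bool) :
    IsDomSet G (C.colorClass b) := by
  intro v
  by_cases hv : C v = b
  · exact Or.inl hv
  · obtain ⟨w, hvw⟩ := hG v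
    have hw : C w ≠ !b := Bool.eq_not.mpr hv ▸ (C.valid hvw).symm
    exact Or.inr ⟨w, Bool.ne_not.mp hw, hvw⟩

theorem Irrational.exists_linearMap_rat_eq_zero_eq_one {x : ℝ} (hx : Irrational x) :
    ∃ f : ℝ →ₗ[ℚ] ℚ, (∀ q : ℚ, f q = 0) ∧ f x = 1 := by
  have hx' : x ∉ Submodule.span ℚ {(1 : ℝ)} := by
    rw [Submodule.mem_span_singleton]
    rintro ⟨q, hq⟩
    exact hx ⟨q, by simpa using hq⟩
  obtain ⟨f, hf, hfp⟩ := Submodule.exists_dual_map_eq_bot_of_notMem hx' inferInstance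
  refine ⟨(f x)⁻¹ • f, fun q => ?_, inv_mul_cancel₀ hf⟩
  have hq : (q : ℝ) ∈ Submodule.span ℚ {(1 : ℝ)} :=
    Submodule.mem_span_singleton.mpr ⟨q, by simp⟩
  have : f q = 0 := by simpa [hfp] using Submodule.mem_map_of_mem (f := f) hq
  simp [this]

theorem shelahSoiferGraph_adj_sub_sqrt_two (x : ℝ) : ShelahSoiferGraph.Adj x (x - √2) :=
  Or.inl ⟨0, by simp⟩

theorem apply_eq_add_one_or_sub_one_of_shelahSoiferGraph_adj {f : ℝ →ₗ[ℚ] ℚ}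
    (hf : ∀ q : ℚ, f q = 0) (hf2 : f √2 = 1) {x y : ℝ} (h : ShelahSoiferGraph.Adj x y) :
    f x = f y + 1 ∨ f x = f y - 1 := by
  rcases h with ⟨q, hq⟩ | ⟨q, hq⟩
  · left
    rw [eq_add_of_sub_eq' hq, map_add, map_add, hf, hf2]
    ring
  · right
    rw [eq_add_of_sub_eq' hq, map_add, map_sub, hf, hf2]
    ring

theorem shelahSoiferGraph_nonempty_coloring_bool : Nonempty (ShelahSoiferGraph.Coloring Bool) := by
  obtain ⟨f, hf, hf2⟩ := irrational_sqrt_two.exists_linearMap_rat_eq_zero_eq_one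
  refine ⟨.mk (fun x => decide (Even ⌊f x⌋)) fun hxy => ?_⟩
  rw [Ne, decide_eq_decide]
  rcases apply_eq_add_one_or_sub_one_of_shelahSoiferGraph_adj hf hf2 hxy with h | h
  · rw [h, Int.floor_add_one, Int.even_add_one]
    exact not_iff_self
  · rw [h, Int.floor_sub_one, Int.even_sub_one]
    exact not_iff_self

/-- The Shelah–Soifer graph has a minimal dominating set. -/
theorem shelahSoifer_has_minimal_dominating_set :
    ∃ D : Set ℝ, IsMinDomSet ShelahSoiferGraph D := by
  obtain ⟨C⟩ := shelahSoiferGraph_nonempty_coloring_bool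
  have hdom := C.isDomSet_colorClass (fun x => ⟨_, shelahSoiferGraph_adj_sub_sqrt_two x⟩) true
  exact ⟨_, hdom.isMinDomSet_of_isIndepSet (C.isIndepSet_colorClass true)⟩
end

section
/- Every independent set of the Shelah–Soifer graph is either not Lebesgue measurable or has Lebesgue measure zero; equivalently, no independent set of the Shelah–Soifer graph is a Lebesgue measurable subset of ℝ of positive measure. -/
open MeasureTheory Pointwise Topology

/-- `S` is an independent set of `G`: no two of its vertices are adjacent. -/
def IsIndepSet {V : Type*} (G : SimpleGraph V) (S : Set V) : Prop :=
  ∀ x ∈ S, ∀ y ∈ S, ¬ G.Adj x y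

/-!
By Steinhaus' theorem, a measurable set `S` of positive measure has `S - S` a neighbourhood
of `0`. Since `ℚ + √2` is dense, it meets `S - S`, giving two points of `S` at distance
`q + √2`, i.e. an edge of the Shelah–Soifer graph inside `S`.
-/

theorem exists_rat_add_mem_of_mem_nhds {U : Set ℝ} {x : ℝ} (hU : U ∈ 𝓝 x) (c : ℝ) :
    ∃ q : ℚ, (q : ℝ) + c ∈ U := by
  have hU' : (· + c) ⁻¹' U ∈ 𝓝 (x - c) :=
    (continuous_add_const c).continuousAt.preimage_mem_nhds (by simpa using hU)
  exact Rat.denseRange_cast.mem_nhds hU'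

theorem not_isIndepSet_shelahSoiferGraph_of_sub_mem_nhds_zero {S : Set ℝ}
    (hS : S - S ∈ 𝓝 0) : ¬ IsIndepSet ShelahSoiferGraph S := by
  intro hindep
  obtain ⟨q, x, hx, y, hy, hxy⟩ := exists_rat_add_mem_of_mem_nhds hS (Real.sqrt 2)
  exact hindep x hx y hy (Or.inl ⟨q, hxy⟩)

/-- Every independent set of the Shelah–Soifer graph is either not Lebesgue measurable
or has Lebesgue measure zero: no independent set is a measurable set of positive measure. -/
theorem shelahSoifer_indep_not_measurable_or_null (S : Set ℝ)
    (hS : IsIndepSet ShelahSoiferGraph S) (hmeas : MeasurableSet S) :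
    volume S = 0 := by
  by_contra hpos
  exact not_isIndepSet_shelahSoiferGraph_of_sub_mem_nhds_zero
    (Measure.sub_mem_nhds_zero_of_addHaar_pos volume S hmeas (pos_iff_ne_zero.2 hpos)) hS
end

section
/- Two reals x and y lie in the same connected component of the Shelah–Soifer graph (i.e., x = y or x and y are joined by a path of finite length) if and only if x − y = q + z·√2 for some rational q and some integer z. -/
/-!
A graph on an additive group whose adjacency depends only on the difference `x - y ∈ S` has
as its components the cosets of the subgroup generated by `S`. For the Shelah–Soifer graph,
`S = (ℚ + √2) ∪ (ℚ - √2)` generates `ℚ + ℤ√2`: it contains `√2`, and `q = (q + √2) - √2`.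
-/

namespace SimpleGraph

variable {A : Type*} [AddGroup A] {G : SimpleGraph A} {S : Set A}

theorem reachable_iff_sub_mem_closure (hG : ∀ x y, G.Adj x y ↔ x - y ∈ S) (x y : A) :
    G.Reachable x y ↔ x - y ∈ AddSubgroup.closure S := by
  constructor
  · rw [reachable_iff_reflTransGen]
    intro h
    induction h with
    | refl => simp
    | tail _ hbc ih =>
      rw [← sub_add_sub_cancel]
      exact add_mem ih (AddSubgroup.subset_closure ((hG _ _).mp hbc))
  · intro h
    suffices ∀ d ∈ AddSubgroup.closure S, ∀ x, G.Reachable x (-d + x) by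
      simpa using this (x - y) h x
    intro d hd
    induction hd using AddSubgroup.closure_induction with
    | mem d hd => exact fun x ↦ ((hG _ _).mpr (by simpa [sub_eq_add_neg])).reachable
    | zero => simp
    | add d e _ _ ihd ihe =>
      intro x
      simpa [neg_add_rev, add_assoc] using (ihd x).trans (ihe (-d + x))
    | neg d _ ih => exact fun x ↦ by simpa using (ih (d + x)).symm

end SimpleGraph

open Real

def shelahSoiferSteps : Set ℝ :=
  {d | (∃ q : ℚ, d = q + √2) ∨ ∃ q : ℚ, d = q - √2}

theorem shelahSoiferGraph_adj_iff (x y : ℝ) :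
    ShelahSoiferGraph.Adj x y ↔ x - y ∈ shelahSoiferSteps :=
  Iff.rfl

theorem mem_closure_shelahSoiferSteps_iff {d : ℝ} :
    d ∈ AddSubgroup.closure shelahSoiferSteps ↔ ∃ (q : ℚ) (z : ℤ), d = q + z * √2 := by
  constructor
  · intro hd
    induction hd using AddSubgroup.closure_induction with
    | mem d hd =>
      rcases hd with ⟨q, rfl⟩ | ⟨q, rfl⟩
      · exact ⟨q, 1, by simp⟩
      · exact ⟨q, -1, by push_cast; ring⟩
    | zero => exact ⟨0, 0, by simp⟩
    | add _ _ _ _ ihd ihe =>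
      obtain ⟨q₁, z₁, rfl⟩ := ihd
      obtain ⟨q₂, z₂, rfl⟩ := ihe
      exact ⟨q₁ + q₂, z₁ + z₂, by push_cast; ring⟩
    | neg _ _ ih =>
      obtain ⟨q, z, rfl⟩ := ih
      exact ⟨-q, -z, by push_cast; ring⟩
  · rintro ⟨q, z, rfl⟩
    have hstep (q : ℚ) : (q : ℝ) + √2 ∈ AddSubgroup.closure shelahSoiferSteps :=
      AddSubgroup.subset_closure (Or.inl ⟨q, rfl⟩)
    have hsqrt : √2 ∈ AddSubgroup.closure shelahSoiferSteps := by simpa using hstep 0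
    have hq : (q : ℝ) ∈ AddSubgroup.closure shelahSoiferSteps := by
      simpa using sub_mem (hstep q) hsqrt
    exact add_mem hq (by simpa using zsmul_mem hsqrt z)

/-- Two reals lie in the same connected component of the Shelah–Soifer graph iff
their difference is of the form `q + z·√2` with `q` rational and `z` an integer. -/
theorem shelahSoifer_reachable_iff (x y : ℝ) :
    ShelahSoiferGraph.Reachable x y ↔
      ∃ (q : ℚ) (z : ℤ), x - y = q + z * Real.sqrt 2 := by
  rw [SimpleGraph.reachable_iff_sub_mem_closure shelahSoiferGraph_adj_iff,
    mem_closure_shelahSoiferSteps_iff]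
end

section
/- The Shelah–Soifer graph has no odd cycles: every cycle in the Shelah–Soifer graph has even length. -/
/-! Each edge changes the coefficient of `√2` in `u - v` by `±1`, so along a walk this
coefficient has the parity of the length. For a closed walk `0 = q + n √2` forces `n = 0`
by irrationality of `√2`, so the length is even. -/

lemma shelahSoiferGraph_walk_sub_eq {u v : ℝ} (w : ShelahSoiferGraph.Walk u v) :
    ∃ (q : ℚ) (n : ℤ), u - v = q + n * Real.sqrt 2 ∧ (n : ZMod 2) = w.length := by
  induction w with
  | nil => exact ⟨0, 0, by simp, by simp⟩
  | cons hadj p ih =>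
    obtain ⟨q, n, hsub, hpar⟩ := ih
    rw [SimpleGraph.Walk.length_cons, Nat.cast_succ, ← hpar]
    rcases hadj with ⟨r, hr⟩ | ⟨r, hr⟩
    · refine ⟨r + q, n + 1, ?_, by push_cast; rfl⟩
      push_cast
      linarith
    · refine ⟨r + q, n - 1, ?_, by push_cast; exact CharTwo.sub_eq_add _ _⟩
      push_cast
      linarith

lemma int_eq_zero_of_ratCast_add_mul_irrational_eq_zero {α : ℝ} (hα : Irrational α) {q : ℚ}
    {n : ℤ} (h : (q : ℝ) + n * α = 0) : n = 0 := by
  by_contra hn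
  exact ((hα.intCast_mul hn).ratCast_add q).ne_zero h

theorem shelahSoifer_no_odd_cycles_general {x : ℝ} (w : ShelahSoiferGraph.Walk x x) :
    Even w.length := by
  obtain ⟨q, n, hsub, hpar⟩ := shelahSoiferGraph_walk_sub_eq w
  have hn : n = 0 :=
    int_eq_zero_of_ratCast_add_mul_irrational_eq_zero irrational_sqrt_two (by linarith)
  rw [← ZMod.natCast_eq_zero_iff_even, ← hpar, hn, Int.cast_zero]

/-- The Shelah–Soifer graph has no odd cycles: every cycle has even length. -/
theorem shelahSoifer_no_odd_cycles {x : ℝ} (w : ShelahSoiferGraph.Walk x x)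
    (hw : w.IsCycle) : Even w.length :=
  shelahSoifer_no_odd_cycles_general w
end

section
/- Let G be a simple graph with no isolated vertices, let M be a maximal matching in G, let W be the set of vertices not incident with any edge of M, let f assign to each vertex w ∈ W an edge f(w) of G incident with w, let F = { f(w) : w ∈ W }, and let M₁ = { e ∈ M : at least one endpoint of e is incident with no edge of F }. Then F ∪ M₁ is a minimal edge cover of G. -/
/-- `M` is a matching in `G`: a set of edges of `G`, no two of which share a vertex. -/
def IsMatchingSet {V : Type*} (G : SimpleGraph V) (M : Set (Sym2 V)) : Prop :=
  M ⊆ G.edgeSet ∧ ∀ e ∈ M, ∀ f ∈ M, e ≠ f → ∀ v : V, ¬ (v ∈ e ∧ v ∈ f)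

/-- `M` is a maximal matching in `G`: a matching that is not a proper subset of any
matching. -/
def IsMaximalMatchingSet {V : Type*} (G : SimpleGraph V) (M : Set (Sym2 V)) : Prop :=
  IsMatchingSet G M ∧ ∀ M' : Set (Sym2 V), M ⊂ M' → ¬ IsMatchingSet G M'

/-- `C` is an edge cover of `G`: a set of edges of `G` such that every vertex is
incident with at least one edge of `C`. -/
def IsEdgeCover {V : Type*} (G : SimpleGraph V) (C : Set (Sym2 V)) : Prop :=
  C ⊆ G.edgeSet ∧ ∀ v : V, ∃ e ∈ C, v ∈ e

/-- `C` is a minimal edge cover of `G`: an edge cover with no proper subset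
that is an edge cover. -/
def IsMinEdgeCover {V : Type*} (G : SimpleGraph V) (C : Set (Sym2 V)) : Prop :=
  IsEdgeCover G C ∧ ∀ C' : Set (Sym2 V), C' ⊂ C → ¬ IsEdgeCover G C'

/-- Let `G` be a graph with no isolated vertices, `M` a maximal matching, `W` the set
of vertices not incident with any edge of `M`, and `f` assign to each `w ∈ W` an edge
of `G` incident with `w`. With `F = f '' W` and
`M₁ = {e ∈ M | some endpoint of e is incident with no edge of F}`, the set `F ∪ M₁`
is a minimal edge cover of `G`. -/
theorem matching_extension_min_edge_cover {V : Type*} (G : SimpleGraph V)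
    (hiso : ∀ v : V, ∃ u : V, G.Adj v u)
    (M : Set (Sym2 V)) (hM : IsMaximalMatchingSet G M)
    (W : Set V) (hW : W = {v : V | ∀ e ∈ M, v ∉ e})
    (f : V → Sym2 V) (hf : ∀ w ∈ W, f w ∈ G.edgeSet ∧ w ∈ f w)
    (F : Set (Sym2 V)) (hF : F = f '' W)
    (M₁ : Set (Sym2 V)) (hM₁ : M₁ = {e ∈ M | ∃ v ∈ e, ∀ g ∈ F, v ∉ g}) :
    IsMinEdgeCover G (F ∪ M₁) := by
  subst hW hF hM₁
  obtain ⟨⟨hMe, hMm⟩, hMmax⟩ := hM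
  -- W is independent: no edge of G joins two uncovered vertices
  have hInd : ∀ w w' : V, (∀ e ∈ M, w ∉ e) → (∀ e ∈ M, w' ∉ e) → w ≠ w' →
      ∀ g ∈ G.edgeSet, w ∈ g → w' ∈ g → False := by
    intro w w' hw hw' hne g hg hwg hw'g
    have hgeq : g = s(w, w') := (Sym2.mem_and_mem_iff hne).mp ⟨hwg, hw'g⟩
    have hgM : g ∉ M := fun h => hw g h hwg
    refine hMmax (insert g M) (Set.ssubset_insert hgM) ⟨?_, ?_⟩
    · intro e he
      rcases he with rfl | he
      · exact hg
      · exact hMe he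
    · intro e1 he1 e2 he2 hne12 v ⟨hv1, hv2⟩
      rcases he1 with rfl | he1 <;> rcases he2 with rfl | he2
      · exact hne12 rfl
      · rw [hgeq, Sym2.mem_iff] at hv1
        rcases hv1 with rfl | rfl
        · exact hw e2 he2 hv2
        · exact hw' e2 he2 hv2
      · rw [hgeq, Sym2.mem_iff] at hv2
        rcases hv2 with rfl | rfl
        · exact hw e1 he1 hv1
        · exact hw' e1 he1 hv1
      · exact hMm e1 he1 e2 he2 hne12 v ⟨hv1, hv2⟩
  constructor
  · constructor
    · intro e he
      rcases he with he | he
      · obtain ⟨w, hw, rfl⟩ := he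
        exact (hf w hw).1
      · exact hMe he.1
    · intro v
      by_cases hv : ∀ e ∈ M, v ∉ e
      · exact ⟨f v, Or.inl ⟨v, hv, rfl⟩, (hf v hv).2⟩
      · push_neg at hv
        obtain ⟨e, heM, hve⟩ := hv
        by_cases he1 : ∃ u ∈ e, ∀ g ∈ f '' {v : V | ∀ e ∈ M, v ∉ e}, u ∉ g
        · exact ⟨e, Or.inr ⟨heM, he1⟩, hve⟩
        · push_neg at he1
          obtain ⟨g, hg, hvg⟩ := he1 v hve
          exact ⟨g, Or.inl hg, hvg⟩
  · rintro C' hC' ⟨hC'e, hC'cov⟩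
    obtain ⟨e, heFM, heC'⟩ := Set.exists_of_ssubset hC'
    rcases heFM with heF | heM₁
    · -- e = f w for some uncovered w; then w is not covered by C'
      obtain ⟨w, hw, rfl⟩ := heF
      obtain ⟨g, hgC', hwg⟩ := hC'cov w
      rcases hC'.1 hgC' with hgF | hgM₁
      · obtain ⟨w', hw', rfl⟩ := hgF
        by_cases hne : w' = w
        · subst hne; exact heC' hgC'
        · exact hInd w w' hw hw' (Ne.symm hne) (f w') (hf w' hw').1 hwg (hf w' hw').2
      · exact hw g hgM₁.1 hwg
    · -- e ∈ M₁ with witness a not in any F-edge; a not covered by C'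
      obtain ⟨heM, a, hae, haF⟩ := heM₁
      obtain ⟨g, hgC', hag⟩ := hC'cov a
      rcases hC'.1 hgC' with hgF | hgM₁
      · exact haF g hgF hag
      · by_cases hge : g = e
        · subst hge; exact heC' hgC'
        · exact hMm g hgM₁.1 e heM hge a ⟨hag, hae⟩
end

section
/- Let (A_n)_{n∈ℕ} be a family of pairwise disjoint nonempty finite sets, let (t_n)_{n∈ℕ}, t′, t″ be further pairwise distinct objects not in any A_n, and let H be the simple graph with vertex set (⋃_{n∈ℕ} A_n) ∪ {t_n : n∈ℕ} ∪ {t′, t″} and edge set {{t″, t′}, {t′, t_0}} ∪ {{t_n, t_{n+1}} : n∈ℕ} ∪ {{t_n, x} : n∈ℕ, x ∈ A_n}. Then every automorphism of H fixes t″, t′, and t_n for every n ∈ ℕ. -/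
/-- Let `(A n)` be pairwise disjoint nonempty finite sets, `t n`, `t'`, `t''` further
pairwise distinct objects not in any `A n`, forming the whole vertex type, and let `H`
have edges `{t'', t'}`, `{t', t 0}`, `{t n, t (n+1)}` and `{t n, x}` for `x ∈ A n`.
Then every automorphism of `H` fixes `t''`, `t'` and every `t n`. -/
theorem automorphisms_fix_spine {V : Type*} (A : ℕ → Set V) (t : ℕ → V) (t' t'' : V)
    (hdisj : ∀ m n : ℕ, m ≠ n → Disjoint (A m) (A n))
    (hne : ∀ n, (A n).Nonempty) (hfin : ∀ n, (A n).Finite)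
    (htinj : Function.Injective t)
    (htA : ∀ n m, t n ∉ A m) (ht'A : ∀ m, t' ∉ A m) (ht''A : ∀ m, t'' ∉ A m)
    (ht't'' : t' ≠ t'') (ht't : ∀ n, t' ≠ t n) (ht''t : ∀ n, t'' ≠ t n)
    (hV : ∀ v : V, (∃ n, v ∈ A n) ∨ (∃ n, v = t n) ∨ v = t' ∨ v = t'')
    (H : SimpleGraph V)
    (hadj : ∀ u v : V, H.Adj u v ↔
      s(u, v) = s(t'', t') ∨ s(u, v) = s(t', t 0) ∨
      (∃ n, s(u, v) = s(t n, t (n + 1))) ∨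
      (∃ n, ∃ x ∈ A n, s(u, v) = s(t n, x)))
    (φ : H ≃g H) :
    φ t'' = t'' ∧ φ t' = t' ∧ ∀ n, φ (t n) = t n := by
  -- neighbor characterizations
  have adj_t'' : ∀ v, H.Adj t'' v ↔ v = t' := by
    intro v
    rw [hadj]
    constructor
    · rintro (h | h | ⟨n, h⟩ | ⟨n, x, hx, h⟩) <;> rw [Sym2.eq_iff] at h <;>
        rcases h with ⟨h1, h2⟩ | ⟨h1, h2⟩
      · exact h2
      · exact absurd h1.symm ht't''
      · exact absurd h1.symm ht't''
      · exact absurd h1 (ht''t 0)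
      · exact absurd h1 (ht''t n)
      · exact absurd h1 (ht''t (n + 1))
      · exact absurd h1 (ht''t n)
      · subst h1; exact absurd hx (ht''A n)
    · rintro rfl
      exact Or.inl rfl
  have adj_t' : ∀ v, H.Adj t' v ↔ v = t'' ∨ v = t 0 := by
    intro v
    rw [hadj]
    constructor
    · rintro (h | h | ⟨n, h⟩ | ⟨n, x, hx, h⟩) <;> rw [Sym2.eq_iff] at h <;>
        rcases h with ⟨h1, h2⟩ | ⟨h1, h2⟩
      · exact absurd h1 ht't''
      · exact Or.inl h2
      · exact Or.inr h2
      · exact absurd h1 (ht't 0)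
      · exact absurd h1 (ht't n)
      · exact absurd h1 (ht't (n + 1))
      · exact absurd h1 (ht't n)
      · subst h1; exact absurd hx (ht'A n)
    · rintro (rfl | rfl)
      · exact Or.inl (Sym2.eq_swap)
      · exact Or.inr (Or.inl rfl)
  have adj_t : ∀ n v, H.Adj (t n) v ↔
      (n = 0 ∧ v = t') ∨ (∃ m, n = m + 1 ∧ v = t m) ∨ v = t (n + 1) ∨ v ∈ A n := by
    intro n v
    rw [hadj]
    constructor
    · rintro (h | h | ⟨m, h⟩ | ⟨m, x, hx, h⟩) <;> rw [Sym2.eq_iff] at h <;>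
        rcases h with ⟨h1, h2⟩ | ⟨h1, h2⟩
      · exact absurd h1.symm (ht''t n)
      · exact absurd h1.symm (ht't n)
      · exact absurd h1.symm (ht't n)
      · exact Or.inl ⟨htinj h1, h2⟩
      · obtain rfl := htinj h1
        exact Or.inr (Or.inr (Or.inl h2))
      · exact Or.inr (Or.inl ⟨m, htinj h1, h2⟩)
      · obtain rfl := htinj h1
        exact Or.inr (Or.inr (Or.inr (by rw [h2]; exact hx)))
      · subst h1; exact absurd hx (htA n m)
    · rintro (⟨rfl, rfl⟩ | ⟨m, rfl, rfl⟩ | rfl | hv)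
      · exact Or.inr (Or.inl Sym2.eq_swap)
      · exact Or.inr (Or.inr (Or.inl ⟨m, Sym2.eq_swap⟩))
      · exact Or.inr (Or.inr (Or.inl ⟨n, rfl⟩))
      · exact Or.inr (Or.inr (Or.inr ⟨n, v, hv, rfl⟩))
  have adj_A : ∀ n x, x ∈ A n → ∀ v, H.Adj x v ↔ v = t n := by
    intro n x hx v
    rw [hadj]
    constructor
    · rintro (h | h | ⟨m, h⟩ | ⟨m, y, hy, h⟩) <;> rw [Sym2.eq_iff] at h <;>
        rcases h with ⟨h1, h2⟩ | ⟨h1, h2⟩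
      · subst h1; exact absurd hx (ht''A n)
      · subst h1; exact absurd hx (ht'A n)
      · subst h1; exact absurd hx (ht'A n)
      · subst h1; exact absurd hx (htA 0 n)
      · subst h1; exact absurd hx (htA m n)
      · subst h1; exact absurd hx (htA (m + 1) n)
      · subst h1; exact absurd hx (htA m n)
      · subst h1
        have hmn : m = n := by
          by_contra hmn
          exact (hdisj m n hmn).ne_of_mem hy hx rfl
        rw [h2, hmn]
    · rintro rfl
      exact Or.inr (Or.inr (Or.inr ⟨n, x, hx, Sym2.eq_swap⟩))
  -- invariants preserved by the automorphism
  set UN : V → Prop := fun v => ∀ a b, H.Adj v a → H.Adj v b → a = b with hUNdef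
  set TH : V → Prop := fun v => ∃ a b c, a ≠ b ∧ a ≠ c ∧ b ≠ c ∧
      H.Adj v a ∧ H.Adj v b ∧ H.Adj v c with hTHdef
  have UN_iff : ∀ v, UN (φ v) ↔ UN v := by
    intro v
    constructor
    · intro h a b ha hb
      exact φ.injective (h (φ a) (φ b) (φ.map_adj_iff.2 ha) (φ.map_adj_iff.2 hb))
    · intro h a b ha hb
      have ha' : H.Adj (φ v) (φ (φ.symm a)) := by rwa [φ.apply_symm_apply]
      have hb' : H.Adj (φ v) (φ (φ.symm b)) := by rwa [φ.apply_symm_apply]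
      have h3 := h _ _ (φ.map_adj_iff.1 ha') (φ.map_adj_iff.1 hb')
      have h4 := congrArg φ h3
      rwa [φ.apply_symm_apply, φ.apply_symm_apply] at h4
  have not_UN_of_TH : ∀ v, TH v → ¬ UN v := by
    rintro v ⟨a, b, c, hab, hac, hbc, ha, hb, hc⟩ hu
    exact hab (hu a b ha hb)
  -- t n satisfies TH
  have TH_t : ∀ n, TH (t n) := by
    intro n
    obtain ⟨x, hx⟩ := hne n
    have hxA : H.Adj (t n) x := (adj_t n x).2 (Or.inr (Or.inr (Or.inr hx)))
    have hxt1 : H.Adj (t n) (t (n + 1)) := (adj_t n _).2 (Or.inr (Or.inr (Or.inl rfl)))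
    cases n with
    | zero =>
      exact ⟨t', t 1, x, ht't 1, fun h => ht'A 0 (h ▸ hx), fun h => htA 1 0 (h ▸ hx),
        (adj_t 0 t').2 (Or.inl ⟨rfl, rfl⟩), hxt1, hxA⟩
    | succ m =>
      refine ⟨t m, t (m + 2), x, fun h => ?_,
        fun h => htA m (m + 1) (h ▸ hx), fun h => htA (m + 2) (m + 1) (h ▸ hx),
        (adj_t (m + 1) (t m)).2 (Or.inr (Or.inl ⟨m, rfl, rfl⟩)), hxt1, hxA⟩
      have := htinj h
      omega
  -- vertices in some A n and t'' satisfy UN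
  have UN_A : ∀ n x, x ∈ A n → UN x := by
    intro n x hx a b ha hb
    rw [adj_A n x hx] at ha hb
    rw [ha, hb]
  have UN_t'' : UN t'' := by
    intro a b ha hb
    rw [adj_t''] at ha hb
    rw [ha, hb]
  -- t' is the unique vertex with ¬ UN and ¬ TH
  have not_UN_t' : ¬ UN t' := by
    intro h
    have h1 : H.Adj t' t'' := (adj_t' t'').2 (Or.inl rfl)
    have h2 : H.Adj t' (t 0) := (adj_t' (t 0)).2 (Or.inr rfl)
    exact ht''t 0 (h _ _ h1 h2)
  have not_TH_t' : ¬ TH t' := by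
    rintro ⟨a, b, c, hab, hac, hbc, ha, hb, hc⟩
    rw [adj_t'] at ha hb hc
    rcases ha with rfl | rfl <;> rcases hb with rfl | rfl <;> rcases hc with rfl | rfl <;>
      first | exact hab rfl | exact hac rfl | exact hbc rfl
  have char_t' : ∀ v, ¬ UN v → ¬ TH v → v = t' := by
    intro v hu ht
    rcases hV v with ⟨n, hv⟩ | ⟨n, rfl⟩ | rfl | rfl
    · exact absurd (UN_A n v hv) hu
    · exact absurd (TH_t n) ht
    · rfl
    · exact absurd UN_t'' hu
  -- φ fixes t'
  have fix_t' : φ t' = t' := by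
    apply char_t'
    · rw [UN_iff]
      exact not_UN_t'
    · intro hth
      obtain ⟨a, b, c, hab, hac, hbc, ha, hb, hc⟩ := hth
      refine not_TH_t' ⟨φ.symm a, φ.symm b, φ.symm c,
        fun h => hab (by simpa using congrArg φ h),
        fun h => hac (by simpa using congrArg φ h),
        fun h => hbc (by simpa using congrArg φ h), ?_, ?_, ?_⟩
      · rw [← φ.map_adj_iff, φ.apply_symm_apply]; exact ha
      · rw [← φ.map_adj_iff, φ.apply_symm_apply]; exact hb
      · rw [← φ.map_adj_iff, φ.apply_symm_apply]; exact hc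
  -- φ fixes t''
  have fix_t'' : φ t'' = t'' := by
    have h : H.Adj (φ t') (φ t'') := φ.map_adj_iff.2 ((adj_t' t'').2 (Or.inl rfl))
    rw [fix_t', adj_t'] at h
    rcases h with h | h
    · exact h
    · exact absurd (h ▸ (UN_iff t'').2 UN_t'') (not_UN_of_TH _ (TH_t 0))
  -- φ fixes t 0
  have fix_t0 : φ (t 0) = t 0 := by
    have h : H.Adj (φ t') (φ (t 0)) := φ.map_adj_iff.2 ((adj_t' (t 0)).2 (Or.inr rfl))
    rw [fix_t', adj_t'] at h
    rcases h with h | h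
    · exact absurd (φ.injective (h.trans fix_t''.symm)).symm (ht''t 0)
    · exact h
  -- φ fixes every t n, by strong induction
  have fix_t : ∀ n, φ (t n) = t n := by
    intro n
    induction n using Nat.strong_induction_on with
    | _ n ih =>
      match n with
      | 0 => exact fix_t0
      | Nat.succ k =>
        have ihk : φ (t k) = t k := ih k (Nat.lt_succ_self k)
        have h : H.Adj (φ (t k)) (φ (t (k + 1))) :=
          φ.map_adj_iff.2 ((adj_t k _).2 (Or.inr (Or.inr (Or.inl rfl))))
        rw [ihk, adj_t] at h
        rcases h with ⟨rfl, h⟩ | ⟨m, hk, h⟩ | h | h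
        · exact absurd (φ.injective (h.trans fix_t'.symm)).symm (ht't 1)
        · exfalso
          have hm : φ (t m) = t m := ih m (by omega)
          have := htinj (φ.injective (h.trans hm.symm))
          omega
        · exact h
        · exact absurd ((UN_iff (t (k + 1))).1 (UN_A k _ h)) (not_UN_of_TH _ (TH_t (k + 1)))
  exact ⟨fix_t'', fix_t', fix_t⟩
end

section
/- Let (A_n)_{n∈ℕ} be a family of pairwise disjoint nonempty finite sets, let (t_n)_{n∈ℕ}, t′, t″ be further pairwise distinct objects not in any A_n, and let H be the simple graph with vertex set (⋃_{n∈ℕ} A_n) ∪ {t_n : n∈ℕ} ∪ {t′, t″} and edge set {{t″, t′}, {t′, t_0}} ∪ {{t_n, t_{n+1}} : n∈ℕ} ∪ {{t_n, x} : n∈ℕ, x ∈ A_n}. Then for every m ∈ ℕ and every x ∈ A_m, the orbit of x under the automorphism group of H, i.e. { φ(x) : φ an automorphism of H }, is exactly A_m. -/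
/-- the "previous" vertex on the tail: `prevAux t' t 0 = t'`, `prevAux t' t (n+1) = t n`. -/
def prevAux {V : Type*} (t' : V) (t : ℕ → V) : ℕ → V
  | 0 => t'
  | n + 1 => t n

/-- Let `(A n)` be pairwise disjoint nonempty finite sets, `t n`, `t'`, `t''` further
pairwise distinct objects not in any `A n`, forming the whole vertex type, and let `H`
have edges `{t'', t'}`, `{t', t 0}`, `{t n, t (n+1)}` and `{t n, x}` for `x ∈ A n`.
Then for every `m` and every `x ∈ A m`, the orbit of `x` under the automorphism group
of `H` is exactly `A m`. -/
theorem orbit_eq_A {V : Type*} (A : ℕ → Set V) (t : ℕ → V) (t' t'' : V)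
    (hdisj : ∀ m n : ℕ, m ≠ n → Disjoint (A m) (A n))
    (hne : ∀ n, (A n).Nonempty) (hfin : ∀ n, (A n).Finite)
    (htinj : Function.Injective t)
    (htA : ∀ n m, t n ∉ A m) (ht'A : ∀ m, t' ∉ A m) (ht''A : ∀ m, t'' ∉ A m)
    (ht't'' : t' ≠ t'') (ht't : ∀ n, t' ≠ t n) (ht''t : ∀ n, t'' ≠ t n)
    (hV : ∀ v : V, (∃ n, v ∈ A n) ∨ (∃ n, v = t n) ∨ v = t' ∨ v = t'')
    (H : SimpleGraph V)
    (hadj : ∀ u v : V, H.Adj u v ↔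
      s(u, v) = s(t'', t') ∨ s(u, v) = s(t', t 0) ∨
      (∃ n, s(u, v) = s(t n, t (n + 1))) ∨
      (∃ n, ∃ x ∈ A n, s(u, v) = s(t n, x)))
    (m : ℕ) (x : V) (hx : x ∈ A m) :
    {y : V | ∃ φ : H ≃g H, φ x = y} = A m := by
  classical
  -- adjacency characterization for vertices in some `A n`
  have adjA : ∀ n, ∀ y ∈ A n, ∀ w, H.Adj y w ↔ w = t n := by
    intro n y hy w
    constructor
    · intro h
      rw [hadj] at h
      simp only [Sym2.eq_iff] at h
      rcases h with (⟨h1, h2⟩ | ⟨h1, h2⟩) | (⟨h1, h2⟩ | ⟨h1, h2⟩) |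
        ⟨k, (⟨h1, h2⟩ | ⟨h1, h2⟩)⟩ | ⟨k, z, hz, (⟨h1, h2⟩ | ⟨h1, h2⟩)⟩
      · rw [h1] at hy; exact absurd hy (ht''A n)
      · rw [h1] at hy; exact absurd hy (ht'A n)
      · rw [h1] at hy; exact absurd hy (ht'A n)
      · rw [h1] at hy; exact absurd hy (htA 0 n)
      · rw [h1] at hy; exact absurd hy (htA k n)
      · rw [h1] at hy; exact absurd hy (htA (k+1) n)
      · rw [h1] at hy; exact absurd hy (htA k n)
      · rw [h1] at hy
        have hnk : n = k := by
          by_contra hnk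
          exact Set.disjoint_left.mp (hdisj n k hnk) hy hz
        rw [h2, hnk]
    · intro h
      rw [hadj]
      exact Or.inr (Or.inr (Or.inr ⟨n, y, hy, h ▸ Sym2.eq_swap⟩))
  -- adjacency characterization for `t''`
  have adjt'' : ∀ w, H.Adj t'' w ↔ w = t' := by
    intro w
    constructor
    · intro h
      rw [hadj] at h
      simp only [Sym2.eq_iff] at h
      rcases h with (⟨h1, h2⟩ | ⟨h1, h2⟩) | (⟨h1, h2⟩ | ⟨h1, h2⟩) |
        ⟨k, (⟨h1, h2⟩ | ⟨h1, h2⟩)⟩ | ⟨k, z, hz, (⟨h1, h2⟩ | ⟨h1, h2⟩)⟩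
      · exact h2
      · exact absurd h1.symm ht't''
      · exact absurd h1.symm ht't''
      · exact absurd h1 (ht''t 0)
      · exact absurd h1 (ht''t k)
      · exact absurd h1 (ht''t (k+1))
      · exact absurd h1 (ht''t k)
      · rw [← h1] at hz; exact absurd hz (ht''A k)
    · intro h
      rw [hadj, h]
      exact Or.inl rfl
  -- adjacency characterization for `t'`
  have adjt' : ∀ w, H.Adj t' w ↔ w = t'' ∨ w = t 0 := by
    intro w
    constructor
    · intro h
      rw [hadj] at h
      simp only [Sym2.eq_iff] at h
      rcases h with (⟨h1, h2⟩ | ⟨h1, h2⟩) | (⟨h1, h2⟩ | ⟨h1, h2⟩) |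
        ⟨k, (⟨h1, h2⟩ | ⟨h1, h2⟩)⟩ | ⟨k, z, hz, (⟨h1, h2⟩ | ⟨h1, h2⟩)⟩
      · exact absurd h1 ht't''
      · exact Or.inl h2
      · exact Or.inr h2
      · exact absurd h1 (ht't 0)
      · exact absurd h1 (ht't k)
      · exact absurd h1 (ht't (k+1))
      · exact absurd h1 (ht't k)
      · rw [← h1] at hz; exact absurd hz (ht'A k)
    · intro h
      rw [hadj]
      rcases h with h | h
      · exact Or.inl (h ▸ Sym2.eq_swap)
      · exact Or.inr (Or.inl (h ▸ rfl))
  -- adjacency characterization for the `t n`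
  have adjT : ∀ n w, H.Adj (t n) w ↔ w = prevAux t' t n ∨ w = t (n + 1) ∨ w ∈ A n := by
    intro n w
    constructor
    · intro h
      rw [hadj] at h
      simp only [Sym2.eq_iff] at h
      rcases h with (⟨h1, h2⟩ | ⟨h1, h2⟩) | (⟨h1, h2⟩ | ⟨h1, h2⟩) |
        ⟨k, (⟨h1, h2⟩ | ⟨h1, h2⟩)⟩ | ⟨k, z, hz, (⟨h1, h2⟩ | ⟨h1, h2⟩)⟩
      · exact absurd h1.symm (ht''t n)
      · exact absurd h1.symm (ht't n)
      · exact absurd h1.symm (ht't n)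
      · have : n = 0 := htinj h1
        subst this
        exact Or.inl h2
      · have : n = k := htinj h1
        subst this
        exact Or.inr (Or.inl h2)
      · have : n = k + 1 := htinj h1
        subst this
        exact Or.inl h2
      · have : n = k := htinj h1
        subst this
        exact Or.inr (Or.inr (h2 ▸ hz))
      · rw [← h1] at hz; exact absurd hz (htA n k)
    · intro h
      rw [hadj]
      rcases h with h | h | h
      · cases n with
        | zero =>
          exact Or.inr (Or.inl (h ▸ Sym2.eq_swap))
        | succ k =>
          exact Or.inr (Or.inr (Or.inl ⟨k, h ▸ Sym2.eq_swap⟩))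
      · exact Or.inr (Or.inr (Or.inl ⟨n, h ▸ rfl⟩))
      · exact Or.inr (Or.inr (Or.inr ⟨n, w, h, rfl⟩))
  -- leaves
  set Leaf : V → Prop := fun v => ∀ w w', H.Adj v w → H.Adj v w' → w = w' with hLeaf
  have leafA : ∀ n, ∀ y ∈ A n, Leaf y := by
    intro n y hy w w' h h'
    rw [(adjA n y hy w).mp h, (adjA n y hy w').mp h']
  have leafT'' : Leaf t'' := by
    intro w w' h h'
    rw [(adjt'' w).mp h, (adjt'' w').mp h']
  have notLeafT : ∀ n, ¬ Leaf (t n) := by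
    intro n hL
    obtain ⟨a, ha⟩ := hne n
    have h1 : H.Adj (t n) a := (adjT n a).mpr (Or.inr (Or.inr ha))
    have h2 : H.Adj (t n) (t (n + 1)) := (adjT n _).mpr (Or.inr (Or.inl rfl))
    exact htA (n + 1) n ((hL _ _ h2 h1) ▸ ha)
  have notLeafT' : ¬ Leaf t' := by
    intro hL
    have h1 : H.Adj t' t'' := (adjt' t'').mpr (Or.inl rfl)
    have h2 : H.Adj t' (t 0) := (adjt' (t 0)).mpr (Or.inr rfl)
    exact ht''t 0 (hL _ _ h1 h2)
  -- leaves transfer along isomorphisms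
  have leafIso : ∀ (φ : H ≃g H) (v : V), Leaf v → Leaf (φ v) := by
    intro φ v hv w w' hw hw'
    have h1 : H.Adj v (φ.symm w) := by
      rw [← φ.map_rel_iff, RelIso.apply_symm_apply]; exact hw
    have h2 : H.Adj v (φ.symm w') := by
      rw [← φ.map_rel_iff, RelIso.apply_symm_apply]; exact hw'
    exact φ.symm.injective (hv _ _ h1 h2)
  -- each `t n` has three pairwise distinct neighbours
  have threeT : ∀ n, ∃ a b c, a ≠ b ∧ a ≠ c ∧ b ≠ c ∧
      H.Adj (t n) a ∧ H.Adj (t n) b ∧ H.Adj (t n) c := by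
    intro n
    obtain ⟨c, hc⟩ := hne n
    refine ⟨prevAux t' t n, t (n + 1), c, ?_, ?_, fun h => htA (n+1) n (h ▸ hc),
      (adjT n _).mpr (Or.inl rfl), (adjT n _).mpr (Or.inr (Or.inl rfl)),
      (adjT n _).mpr (Or.inr (Or.inr hc))⟩
    · cases n with
      | zero => exact ht't 1
      | succ k => exact fun h => by have := htinj h; omega
    · cases n with
      | zero => exact fun h => ht'A 0 (by rw [← h] at hc; exact hc)
      | succ k => exact fun h => htA k (k+1) (by rw [← h] at hc; exact hc)
  -- every automorphism fixes t'
  have fixT' : ∀ φ : H ≃g H, φ t' = t' := by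
    intro φ
    have hA1 : H.Adj (φ t') (φ t'') := φ.map_rel_iff.mpr ((adjt' t'').mpr (Or.inl rfl))
    have hA2 : H.Adj (φ t') (φ (t 0)) := φ.map_rel_iff.mpr ((adjt' (t 0)).mpr (Or.inr rfl))
    have hne12 : φ t'' ≠ φ (t 0) := fun h => ht''t 0 (φ.injective h)
    have key : ∀ w, H.Adj (φ t') w → w = φ t'' ∨ w = φ (t 0) := by
      intro w hw
      have h0 : H.Adj t' (φ.symm w) := by
        rw [← φ.map_rel_iff, RelIso.apply_symm_apply]; exact hw
      rcases (adjt' _).mp h0 with h | h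
      · left; rw [← h, RelIso.apply_symm_apply]
      · right; rw [← h, RelIso.apply_symm_apply]
    rcases hV (φ t') with ⟨n, hc⟩ | ⟨n, hc⟩ | hc | hc
    · exfalso
      exact hne12 (((adjA n _ hc _).mp hA1).trans ((adjA n _ hc _).mp hA2).symm)
    · exfalso
      obtain ⟨a, b, c, hab, hac, hbc, ha, hb, hcadj⟩ := threeT n
      have ka := key a (by rw [hc]; exact ha)
      have kb := key b (by rw [hc]; exact hb)
      have kc := key c (by rw [hc]; exact hcadj)
      rcases ka with ka | ka <;> rcases kb with kb | kb <;> rcases kc with kc | kc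
      · exact hab (ka.trans kb.symm)
      · exact hab (ka.trans kb.symm)
      · exact hac (ka.trans kc.symm)
      · exact hbc (kb.trans kc.symm)
      · exact hbc (kb.trans kc.symm)
      · exact hac (ka.trans kc.symm)
      · exact hab (ka.trans kb.symm)
      · exact hab (ka.trans kb.symm)
    · exact hc
    · exfalso
      rw [hc] at hA1 hA2
      exact hne12 (((adjt'' _).mp hA1).trans ((adjt'' _).mp hA2).symm)
  -- every automorphism fixes t''
  have fixT'' : ∀ φ : H ≃g H, φ t'' = t'' := by
    intro φ
    have h1 : H.Adj t' (φ t'') := by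
      rw [← fixT' φ]
      exact φ.map_rel_iff.mpr ((adjt' t'').mpr (Or.inl rfl))
    rcases (adjt' _).mp h1 with h | h
    · exact h
    · exfalso
      have := leafIso φ t'' leafT''
      rw [h] at this
      exact notLeafT 0 this
  -- every automorphism fixes t 0
  have fixT0 : ∀ φ : H ≃g H, φ (t 0) = t 0 := by
    intro φ
    have h1 : H.Adj t' (φ (t 0)) := by
      rw [← fixT' φ]
      exact φ.map_rel_iff.mpr ((adjt' (t 0)).mpr (Or.inr rfl))
    rcases (adjt' _).mp h1 with h | h
    · exfalso
      rw [← fixT'' φ] at h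
      exact ht''t 0 (φ.injective h).symm
    · exact h
  -- every automorphism fixes every t n
  have fixT : ∀ φ : H ≃g H, ∀ n, φ (t n) = t n := by
    intro φ n
    induction n using Nat.strong_induction_on with
    | _ n ih =>
      match n with
      | 0 => exact fixT0 φ
      | Nat.succ k =>
        have hk : φ (t k) = t k := ih k (by omega)
        have hprev : φ (prevAux t' t k) = prevAux t' t k := by
          cases k with
          | zero => exact fixT' φ
          | succ j => exact ih j (by omega)
        have hadjk : H.Adj (t k) (φ (t (k + 1))) := by
          rw [← hk]
          exact φ.map_rel_iff.mpr ((adjT k (t (k + 1))).mpr (Or.inr (Or.inl rfl)))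
        rcases (adjT k _).mp hadjk with h | h | h
        · exfalso
          have heq : t (k + 1) = prevAux t' t k := φ.injective (by rw [h, hprev])
          cases k with
          | zero => exact ht't 1 heq.symm
          | succ j => have := htinj heq; omega
        · exact h
        · exfalso
          have hL : Leaf (φ (t (k + 1))) := leafA k _ h
          have := leafIso φ.symm _ hL
          rw [RelIso.symm_apply_apply] at this
          exact notLeafT (k + 1) this
  -- main proof
  ext y
  simp only [Set.mem_setOf_eq]
  constructor
  · rintro ⟨φ, rfl⟩
    have h1 : H.Adj (t m) (φ x) := by
      rw [← fixT φ m]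
      exact φ.map_rel_iff.mpr (((adjA m x hx (t m)).mpr rfl).symm)
    have hLx : Leaf (φ x) := leafIso φ x (leafA m x hx)
    rcases (adjT m _).mp h1 with h | h | h
    · exfalso
      rw [h] at hLx
      cases m with
      | zero => exact notLeafT' hLx
      | succ j => exact notLeafT j hLx
    · exfalso
      rw [h] at hLx
      exact notLeafT (m + 1) hLx
    · exact h
  · intro hy
    have hxt : x ≠ t m := fun h => htA m m (h ▸ hx)
    have hyt : y ≠ t m := fun h => htA m m (h ▸ hy)
    have hdir : ∀ u v, H.Adj u v → H.Adj (Equiv.swap x y u) (Equiv.swap x y v) := by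
      intro u v huv
      by_cases hux : u = x
      · subst hux
        have hv : v = t m := (adjA m u hx v).mp huv
        subst hv
        rw [Equiv.swap_apply_left, Equiv.swap_apply_of_ne_of_ne (Ne.symm hxt) (Ne.symm hyt)]
        exact (adjA m y hy (t m)).mpr rfl
      by_cases huy : u = y
      · subst huy
        have hv : v = t m := (adjA m u hy v).mp huv
        subst hv
        rw [Equiv.swap_apply_right, Equiv.swap_apply_of_ne_of_ne (Ne.symm hxt) (Ne.symm hyt)]
        exact (adjA m x hx (t m)).mpr rfl
      by_cases hvx : v = x
      · subst hvx
        have hu : u = t m := (adjA m v hx u).mp huv.symm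
        subst hu
        rw [Equiv.swap_apply_left, Equiv.swap_apply_of_ne_of_ne (Ne.symm hxt) (Ne.symm hyt)]
        exact ((adjA m y hy (t m)).mpr rfl).symm
      by_cases hvy : v = y
      · subst hvy
        have hu : u = t m := (adjA m v hy u).mp huv.symm
        subst hu
        rw [Equiv.swap_apply_right, Equiv.swap_apply_of_ne_of_ne (Ne.symm hxt) (Ne.symm hyt)]
        exact ((adjA m x hx (t m)).mpr rfl).symm
      · rw [Equiv.swap_apply_of_ne_of_ne hux huy, Equiv.swap_apply_of_ne_of_ne hvx hvy]
        exact huv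
    refine ⟨{ toEquiv := Equiv.swap x y, map_rel_iff' := ?_ }, Equiv.swap_apply_left x y⟩
    intro u v
    constructor
    · intro h
      have h2 := hdir _ _ h
      simpa [Equiv.swap_apply_self] using h2
    · exact hdir u v
end

section
/- Let (A_i)_{i∈I} be a family of pairwise disjoint nonempty sets, for each i ∈ I let B_i⁰ = A_i × {0} and B_i¹ = A_i × {1}, let t be a further object not in any B_i⁰ or B_i¹, and let G be the simple graph with vertex set {t} ∪ ⋃_{i∈I}(B_i⁰ ∪ B_i¹) and edge set consisting of: {t, x} for every i ∈ I and x ∈ B_i⁰; {x, y} for every i ∈ I, x ∈ B_i⁰, y ∈ B_i¹; {x, y} for every i ∈ I and distinct x, y ∈ B_i⁰; and {x, y} for every i ∈ I and distinct x, y ∈ B_i¹. Then every minimal dominating set D of G satisfies |(B_i⁰ ∪ B_i¹) ∩ D| = 1 for every i ∈ I. -/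
/-!
Within one block `B_i⁰ ∪ B_i¹`, which is a clique, every vertex has as closed neighbourhood
the block itself, together with `t` for the vertices of `B_i⁰`. Dominating a vertex of `B_i¹`
therefore forces `D` to meet the block. If `D` contained two vertices of one block, one of
them, `w`, lies in `B_i¹` or the other, `k`, lies in `B_i⁰`; then `N[w] ⊆ N[k]`, so `D \ {w}`
still dominates, against minimality.
-/

namespace SimpleGraph

variable {V : Type*} (G : SimpleGraph V)

def closedNbhd (v : V) : Set V := insert v (G.neighborSet v)

variable {G}

theorem mem_closedNbhd_iff {u v : V} : u ∈ G.closedNbhd v ↔ u = v ∨ G.Adj u v := by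
  rw [closedNbhd, Set.mem_insert_iff, mem_neighborSet, G.adj_comm]

theorem mem_closedNbhd_comm {u v : V} : u ∈ G.closedNbhd v ↔ v ∈ G.closedNbhd u := by
  rw [mem_closedNbhd_iff, mem_closedNbhd_iff, eq_comm, G.adj_comm]

end SimpleGraph

open SimpleGraph

section Domination

variable {V : Type*} {G : SimpleGraph V} {D : Set V}

theorem IsDomSet.exists_mem_closedNbhd (hD : IsDomSet G D) (v : V) :
    ∃ d ∈ D, d ∈ G.closedNbhd v := by
  rcases hD v with hv | ⟨d, hd, hvd⟩
  · exact ⟨v, hv, Set.mem_insert v _⟩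
  · exact ⟨d, hd, mem_closedNbhd_comm.mp (mem_closedNbhd_iff.mpr (Or.inr hvd))⟩

theorem IsMinDomSet.eq_of_closedNbhd_subset (hD : IsMinDomSet G D) {w k : V} (hw : w ∈ D)
    (hk : k ∈ D) (hwk : G.closedNbhd w ⊆ G.closedNbhd k) : w = k := by
  by_contra hne
  have hk' : k ∈ D \ {w} := ⟨hk, Ne.symm hne⟩
  refine hD.2 (D \ {w}) (Set.sdiff_singleton_ssubset.mpr hw) fun u => ?_
  obtain ⟨d, hdD, hud⟩ := hD.1.exists_mem_closedNbhd u
  rw [mem_closedNbhd_comm] at hud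
  by_cases hdw : d = w
  · subst hdw
    rcases mem_closedNbhd_iff.mp (hwk hud) with rfl | hadj
    · exact Or.inl hk'
    · exact Or.inr ⟨k, hk', hadj⟩
  · rcases mem_closedNbhd_iff.mp hud with rfl | hadj
    · exact Or.inl ⟨hdD, hdw⟩
    · exact Or.inr ⟨d, ⟨hdD, hdw⟩, hadj⟩

end Domination

def BlockGraphAdj {α I : Type*} (A : I → Set α) (u v : Option (α × Fin 2)) : Prop :=
  (∃ i, ∃ x : α × Fin 2, x.1 ∈ A i ∧ x.2 = 0 ∧ s(u, v) = s(none, some x)) ∨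
  (∃ i, ∃ x y : α × Fin 2, x.1 ∈ A i ∧ x.2 = 0 ∧ y.1 ∈ A i ∧ y.2 = 1 ∧
    s(u, v) = s(some x, some y)) ∨
  (∃ i, ∃ x y : α × Fin 2, x.1 ∈ A i ∧ x.2 = 0 ∧ y.1 ∈ A i ∧ y.2 = 0 ∧ x ≠ y ∧
    s(u, v) = s(some x, some y)) ∨
  (∃ i, ∃ x y : α × Fin 2, x.1 ∈ A i ∧ x.2 = 1 ∧ y.1 ∈ A i ∧ y.2 = 1 ∧ x ≠ y ∧
    s(u, v) = s(some x, some y))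

/-- The block `B_i⁰ ∪ B_i¹`, the vertex `t` being `none`. -/
def block {α I : Type*} (A : I → Set α) (i : I) : Set (Option (α × Fin 2)) :=
  {v | ∃ x : α × Fin 2, v = some x ∧ x.1 ∈ A i}

section BlockGraph

open Function

variable {α I : Type*} {A : I → Set α} {G : SimpleGraph (Option (α × Fin 2))} {i : I}
  {x : α × Fin 2} {u : Option (α × Fin 2)}

theorem adj_none_some_of_snd_eq_zero (hadj : ∀ u v, G.Adj u v ↔ BlockGraphAdj A u v)
    (hx : x.1 ∈ A i) (h0 : x.2 = 0) : G.Adj none (some x) :=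
  (hadj _ _).mpr (Or.inl ⟨i, x, hx, h0, rfl⟩)

theorem mem_closedNbhd_of_mem_block (hadj : ∀ u v, G.Adj u v ↔ BlockGraphAdj A u v)
    (hu : u ∈ block A i) (hx : x.1 ∈ A i) : u ∈ G.closedNbhd (some x) := by
  obtain ⟨y, rfl, hy⟩ := hu
  rw [mem_closedNbhd_iff, hadj, BlockGraphAdj]
  rcases eq_or_ne y x with rfl | hyx
  · exact Or.inl rfl
  right
  have fin2 : ∀ b : Fin 2, b = 0 ∨ b = 1 := by decide
  rcases fin2 y.2 with hy0 | hy1 <;> rcases fin2 x.2 with hx0 | hx1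
  · exact Or.inr (Or.inr (Or.inl ⟨i, y, x, hy, hy0, hx, hx0, hyx, rfl⟩))
  · exact Or.inr (Or.inl ⟨i, y, x, hy, hy0, hx, hx1, rfl⟩)
  · exact Or.inr (Or.inl ⟨i, x, y, hx, hx0, hy, hy1, Sym2.eq_swap⟩)
  · exact Or.inr (Or.inr (Or.inr ⟨i, y, x, hy, hy1, hx, hx1, hyx, rfl⟩))

theorem eq_none_or_mem_block_of_adj (hadj : ∀ u v, G.Adj u v ↔ BlockGraphAdj A u v)
    (hdisj : Pairwise (Disjoint on A)) (hx : x.1 ∈ A i) (h : G.Adj u (some x)) :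
    (u = none ∧ x.2 = 0) ∨ u ∈ block A i := by
  have hsame : ∀ {j}, x.1 ∈ A j → j = i := fun hj =>
    subsingleton_setOfPred_mem_iff_pairwise_disjoint.mpr hdisj x.1 hj hx
  rw [hadj, BlockGraphAdj] at h
  rcases h with ⟨j, z, -, hz0, he⟩ | h
  · rcases Sym2.eq_iff.mp he with ⟨rfl, hxz⟩ | ⟨-, hnone⟩
    · exact Or.inl ⟨rfl, Option.some_injective _ hxz ▸ hz0⟩
    · exact absurd hnone (Option.some_ne_none x)
  obtain ⟨j, z, y, hz, hy, he⟩ : ∃ j, ∃ z y : α × Fin 2,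
      z.1 ∈ A j ∧ y.1 ∈ A j ∧ s(u, some x) = s(some z, some y) := by
    rcases h with ⟨j, z, y, hz, -, hy, -, he⟩ | ⟨j, z, y, hz, -, hy, -, -, he⟩ |
      ⟨j, z, y, hz, -, hy, -, -, he⟩ <;> exact ⟨j, z, y, hz, hy, he⟩
  right
  rcases Sym2.eq_iff.mp he with ⟨rfl, hxy⟩ | ⟨rfl, hxz⟩
  · exact ⟨z, rfl, hsame (Option.some_injective _ hxy ▸ hy) ▸ hz⟩
  · exact ⟨y, rfl, hsame (Option.some_injective _ hxz ▸ hz) ▸ hy⟩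

theorem mem_closedNbhd_some_iff (hadj : ∀ u v, G.Adj u v ↔ BlockGraphAdj A u v)
    (hdisj : Pairwise (Disjoint on A)) (hx : x.1 ∈ A i) :
    u ∈ G.closedNbhd (some x) ↔ (u = none ∧ x.2 = 0) ∨ u ∈ block A i := by
  constructor
  · rw [mem_closedNbhd_iff]
    rintro (rfl | h)
    · exact Or.inr ⟨x, rfl, hx⟩
    · exact eq_none_or_mem_block_of_adj hadj hdisj hx h
  · rintro (⟨rfl, h0⟩ | hu)
    · exact mem_closedNbhd_iff.mpr (Or.inr (adj_none_some_of_snd_eq_zero hadj hx h0))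
    · exact mem_closedNbhd_of_mem_block hadj hu hx

theorem closedNbhd_some_subset (hadj : ∀ u v, G.Adj u v ↔ BlockGraphAdj A u v)
    (hdisj : Pairwise (Disjoint on A)) {w k : α × Fin 2} (hw : w.1 ∈ A i)
    (hk : k.1 ∈ A i) (hwk : w.2 = 1 ∨ k.2 = 0) :
    G.closedNbhd (some w) ⊆ G.closedNbhd (some k) := by
  intro u hu
  rw [mem_closedNbhd_some_iff hadj hdisj hw] at hu
  rw [mem_closedNbhd_some_iff hadj hdisj hk]
  rcases hu with ⟨rfl, hw0⟩ | hu
  · rcases hwk with hw1 | hk0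
    · exact absurd (hw0.symm.trans hw1) zero_ne_one
    · exact Or.inl ⟨rfl, hk0⟩
  · exact Or.inr hu

theorem IsDomSet.inter_block_nonempty (hadj : ∀ u v, G.Adj u v ↔ BlockGraphAdj A u v)
    (hdisj : Pairwise (Disjoint on A)) {D : Set (Option (α × Fin 2))}
    (hD : IsDomSet G D) (hne : (A i).Nonempty) : (D ∩ block A i).Nonempty := by
  obtain ⟨a, ha⟩ := hne
  obtain ⟨d, hdD, hd⟩ := hD.exists_mem_closedNbhd (some (a, 1))
  rcases (mem_closedNbhd_some_iff hadj hdisj (x := (a, 1)) ha).mp hd with ⟨-, h10⟩ | hd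
  · exact absurd h10 one_ne_zero
  · exact ⟨d, hdD, hd⟩

theorem IsMinDomSet.inter_block_subsingleton (hadj : ∀ u v, G.Adj u v ↔ BlockGraphAdj A u v)
    (hdisj : Pairwise (Disjoint on A)) {D : Set (Option (α × Fin 2))}
    (hD : IsMinDomSet G D) : (D ∩ block A i).Subsingleton := by
  rintro _ ⟨h₁, x₁, rfl, hx₁⟩ _ ⟨h₂, x₂, rfl, hx₂⟩
  by_cases h₂0 : x₂.2 = 0
  · exact hD.eq_of_closedNbhd_subset h₁ h₂
      (closedNbhd_some_subset hadj hdisj hx₁ hx₂ (Or.inr h₂0))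
  · exact (hD.eq_of_closedNbhd_subset h₂ h₁
      (closedNbhd_some_subset hadj hdisj hx₂ hx₁ (Or.inl (Fin.eq_one_of_ne_zero _ h₂0)))).symm

end BlockGraph

theorem minimal_dominating_set_picks_one_general {α : Type*} {I : Type*} (A : I → Set α)
    (hdisj : ∀ i j : I, i ≠ j → Disjoint (A i) (A j))
    (hne : ∀ i, (A i).Nonempty)
    (G : SimpleGraph (Option (α × Fin 2)))
    (hadj : ∀ u v : Option (α × Fin 2), G.Adj u v ↔
      (∃ i, ∃ x : α × Fin 2, x.1 ∈ A i ∧ x.2 = 0 ∧ s(u, v) = s(none, some x)) ∨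
      (∃ i, ∃ x y : α × Fin 2, x.1 ∈ A i ∧ x.2 = 0 ∧ y.1 ∈ A i ∧ y.2 = 1 ∧
        s(u, v) = s(some x, some y)) ∨
      (∃ i, ∃ x y : α × Fin 2, x.1 ∈ A i ∧ x.2 = 0 ∧ y.1 ∈ A i ∧ y.2 = 0 ∧ x ≠ y ∧
        s(u, v) = s(some x, some y)) ∨
      (∃ i, ∃ x y : α × Fin 2, x.1 ∈ A i ∧ x.2 = 1 ∧ y.1 ∈ A i ∧ y.2 = 1 ∧ x ≠ y ∧
        s(u, v) = s(some x, some y)))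
    (D : Set (Option (α × Fin 2))) (hD : IsMinDomSet G D) (i : I) :
    ∃! v : Option (α × Fin 2), v ∈ D ∧ ∃ x : α × Fin 2, v = some x ∧ x.1 ∈ A i := by
  obtain ⟨v, hv⟩ := IsDomSet.inter_block_nonempty hadj hdisj hD.1 (hne i)
  exact ⟨v, hv, fun w hw => hD.inter_block_subsingleton hadj hdisj hw hv⟩

/-- Let `(A i)` be pairwise disjoint nonempty sets covering `α`, and for each `i` let
`B i 0 = A i × {0}` and `B i 1 = A i × {1}` inside `α × Fin 2`.  The vertices are these
pairs together with one extra vertex `t = none` (so the vertex type is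
`Option (α × Fin 2)`), and the edges are: `{t, x}` for `x ∈ B i 0`; `{x, y}` for
`x ∈ B i 0`, `y ∈ B i 1`; and `{x, y}` for distinct `x, y ∈ B i 0` or distinct
`x, y ∈ B i 1`.  Then every minimal dominating set `D` of this graph contains exactly
one vertex of `B i 0 ∪ B i 1` for every `i`. -/
theorem minimal_dominating_set_picks_one {α : Type*} {I : Type*} (A : I → Set α)
    (hdisj : ∀ i j : I, i ≠ j → Disjoint (A i) (A j))
    (hne : ∀ i, (A i).Nonempty)
    (hcov : ∀ a : α, ∃ i, a ∈ A i)
    (G : SimpleGraph (Option (α × Fin 2)))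
    (hadj : ∀ u v : Option (α × Fin 2), G.Adj u v ↔
      (∃ i, ∃ x : α × Fin 2, x.1 ∈ A i ∧ x.2 = 0 ∧ s(u, v) = s(none, some x)) ∨
      (∃ i, ∃ x y : α × Fin 2, x.1 ∈ A i ∧ x.2 = 0 ∧ y.1 ∈ A i ∧ y.2 = 1 ∧
        s(u, v) = s(some x, some y)) ∨
      (∃ i, ∃ x y : α × Fin 2, x.1 ∈ A i ∧ x.2 = 0 ∧ y.1 ∈ A i ∧ y.2 = 0 ∧ x ≠ y ∧
        s(u, v) = s(some x, some y)) ∨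
      (∃ i, ∃ x y : α × Fin 2, x.1 ∈ A i ∧ x.2 = 1 ∧ y.1 ∈ A i ∧ y.2 = 1 ∧ x ≠ y ∧
        s(u, v) = s(some x, some y)))
    (D : Set (Option (α × Fin 2))) (hD : IsMinDomSet G D) (i : I) :
    ∃! v : Option (α × Fin 2), v ∈ D ∧ ∃ x : α × Fin 2, v = some x ∧ x.1 ∈ A i :=
  minimal_dominating_set_picks_one_general A hdisj hne G hadj D hD i
end
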